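/- (Five lemma for stability.) Let (A_m) → (B_m) → (C_m) → (D_m) → (E_m) be an exact sequence of level morphisms of inverse sequences of groups indexed by the natural numbers. If (A_m), (B_m), (D_m), and (E_m) are stable, then (C_m) is stable. -/

import Mathlib

universe v

/-- An inverse sequence of (not necessarily abelian) groups, indexed by the natural
numbers, is *stable* if it is pro-isomorphic to a rudimentary system, i.e. to a system
consisting of a single group `K`: there are morphisms of inverse sequences
`(G_m) → (K)` (given by `m₀` and `F`) and `(K) → (G_m)` (given by the compatible
family `u`) whose composites are equivalent to the respective identity morphisms. -/
def IsStableSequence (G : ℕ → Type v) [∀ m, Group (G m)]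
    (p : ∀ {m n : ℕ}, m ≤ n → (G n →* G m)) : Prop :=
  ∃ (K : GrpCat.{v}) (m₀ : ℕ) (F : G m₀ →* K) (u : ∀ m : ℕ, K →* G m),
    (∀ (m n : ℕ) (h : m ≤ n) (k : K), p h (u n k) = u m k) ∧
    (∀ k : K, F (u m₀ k) = k) ∧
    (∀ m : ℕ, ∃ (c : ℕ) (h1 : m ≤ c) (h2 : m₀ ≤ c),
      ∀ g : G c, u m (F (p h2 g)) = p h1 g)


/-!
A sequence of groups is stable exactly when it is Mittag-Leffler and its projection onto some
term `G T` is a monomorphism of pro-groups: the stable images then form a subsystem whose bonding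
maps are eventually isomorphisms onto the stable image in `G T`, and that group is the
rudimentary system. Both properties pass to the middle term of an exact sequence by diagram
chases: `C` is Mittag-Leffler because `B` and `D` are and the projection of `E` is monic, and the
projection of `C` is monic because those of `B` and `D` are and `A` is Mittag-Leffler.
-/

section InverseSequence

variable {G : ℕ → Type v} [∀ m, Group (G m)]

def IsMittagLeffler (p : ∀ {m n : ℕ}, m ≤ n → (G n →* G m)) : Prop :=
  ∀ m, ∃ c, m ≤ c ∧ ∀ (k n : ℕ) (hmk : m ≤ k) (hkn : k ≤ n), c ≤ k →
    ∀ g : G k, ∃ g' : G n, p (hmk.trans hkn) g' = p hmk g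

/-- The projection of the sequence onto its term `G T` is a monomorphism of pro-groups. -/
def HasMonicProjection (p : ∀ {m n : ℕ}, m ≤ n → (G n →* G m)) : Prop :=
  ∃ T, ∀ (m : ℕ) (hTm : T ≤ m), ∃ c, ∀ (n : ℕ) (hmn : m ≤ n), c ≤ n →
    ∀ g : G n, p (hTm.trans hmn) g = 1 → p hmn g = 1

variable {p : ∀ {m n : ℕ}, m ≤ n → (G n →* G m)}

theorem IsStableSequence.isMittagLeffler
    (hcomp : ∀ {m n k : ℕ} (h : m ≤ n) (h' : n ≤ k) (x : G k),
      p h (p h' x) = p (h.trans h') x)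
    (h : IsStableSequence G p) : IsMittagLeffler p := by
  obtain ⟨K, m₀, F, u, hu, -, hFu⟩ := h
  intro m
  obtain ⟨c, hmc, hm₀c, hc⟩ := hFu m
  refine ⟨c, hmc, fun k n hmk hkn hck g => ⟨u n (F (p hm₀c (p hck g))), ?_⟩⟩
  rw [hu, hc, hcomp]

theorem IsStableSequence.hasMonicProjection
    (hcomp : ∀ {m n k : ℕ} (h : m ≤ n) (h' : n ≤ k) (x : G k),
      p h (p h' x) = p (h.trans h') x)
    (h : IsStableSequence G p) : HasMonicProjection p := by
  obtain ⟨K, m₀, F, u, -, -, hFu⟩ := h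
  refine ⟨m₀, fun m hm₀m => ?_⟩
  obtain ⟨c, hmc, hm₀c, hc⟩ := hFu m
  refine ⟨c, fun n hmn hcn g hg => ?_⟩
  rw [← hcomp hmc hcn, ← hc, hcomp, hg, map_one, map_one]

section Subsystem

variable (S : ∀ m, Subgroup (G m)) (hS : ∀ {m n : ℕ} (h : m ≤ n), Set.MapsTo (p h) (S n) (S m))
  {T : ℕ} (hinj : ∀ {n : ℕ} (h : T ≤ n) {x : G n}, x ∈ S n → p h x = 1 → x = 1)
  (hsurj : ∀ {n : ℕ} (h : T ≤ n) {y : G T}, y ∈ S T → ∃ x ∈ S n, p h x = y)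

noncomputable def restrictEquiv {n : ℕ} (h : T ≤ n) : S n ≃* S T :=
  MulEquiv.ofBijective (((p h).comp (S n).subtype).codRestrict (S T) fun x => hS h x.2)
    ⟨(injective_iff_map_eq_one _).2 fun x hx =>
      Subtype.ext (hinj h x.2 (congrArg Subtype.val hx)),
    fun y => (hsurj h y.2).elim fun x hx => ⟨⟨x, hx.1⟩, Subtype.ext hx.2⟩⟩

theorem bonding_restrictEquiv_symm {n : ℕ} (h : T ≤ n) (k : S T) :
    p h ((restrictEquiv S hS hinj hsurj h).symm k : G n) = k :=
  congrArg Subtype.val ((restrictEquiv S hS hinj hsurj h).apply_symm_apply k)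

theorem restrictEquiv_symm_eq_iff {n : ℕ} (h : T ≤ n) (k : S T) {x : G n} (hx : x ∈ S n) :
    (restrictEquiv S hS hinj hsurj h).symm k = ⟨x, hx⟩ ↔ p h x = k := by
  rw [MulEquiv.symm_apply_eq, Subtype.ext_iff, eq_comm]
  rfl

end Subsystem

theorem isStableSequence_of_subsystem
    (hcomp : ∀ {m n k : ℕ} (h : m ≤ n) (h' : n ≤ k) (x : G k),
      p h (p h' x) = p (h.trans h') x)
    (S : ∀ m, Subgroup (G m)) (hS : ∀ {m n : ℕ} (h : m ≤ n), Set.MapsTo (p h) (S n) (S m))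
    (c : ℕ → ℕ) (hc : ∀ m, m ≤ c m) (hrange : ∀ m (g : G (c m)), p (hc m) g ∈ S m)
    (T : ℕ) (hinj : ∀ {n : ℕ} (h : T ≤ n) {x : G n}, x ∈ S n → p h x = 1 → x = 1)
    (hsurj : ∀ {n : ℕ} (h : T ≤ n) {y : G T}, y ∈ S T → ∃ x ∈ S n, p h x = y) :
    IsStableSequence G p := by
  let e {n : ℕ} (h : T ≤ n) := restrictEquiv S hS hinj hsurj h
  -- `u m` passes through level `max m T`, where `S` is already isomorphic to `S T`.
  let u (m : ℕ) : S T →* G m :=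
    ((p (le_max_left m T)).comp (S _).subtype).comp (e (le_max_right m T)).symm.toMonoidHom
  have hu : ∀ m k, u m k = p (le_max_left m T) ((e (le_max_right m T)).symm k : G _) :=
    fun _ _ => rfl
  refine ⟨GrpCat.of (S T), c T, (p (hc T)).codRestrict (S T) (hrange T), u, ?_, ?_, ?_⟩
  · intro m n hmn k
    have hmax : max m T ≤ max n T := max_le_max_right T hmn
    have hk : (e (le_max_right m T)).symm k =
        ⟨_, hS hmax ((e (le_max_right n T)).symm k).2⟩ := by
      rw [restrictEquiv_symm_eq_iff, hcomp]
      exact bonding_restrictEquiv_symm S hS hinj hsurj _ k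
    rw [hu, hu, hk, hcomp, hcomp]
  · intro k
    apply Subtype.ext
    change p (hc T) (u (c T) k) = k
    rw [hu, hcomp]
    exact bonding_restrictEquiv_symm S hS hinj hsurj _ k
  · intro m
    have hM : max m T ≤ max (c (max m T)) (c T) := (hc _).trans (le_max_left _ _)
    refine ⟨max (c (max m T)) (c T), (le_max_left m T).trans hM, le_max_right _ _, fun g => ?_⟩
    have hmem : p hM g ∈ S (max m T) := by
      rw [← hcomp (hc _) (le_max_left _ _)]
      exact hrange _ _
    have hg : (e (le_max_right m T)).symm ((p (hc T)).codRestrict (S T) (hrange T)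
        (p (le_max_right _ _) g)) = ⟨_, hmem⟩ := by
      rw [restrictEquiv_symm_eq_iff, hcomp]
      exact (hcomp _ _ g).symm
    rw [hu, hg, hcomp]

theorem IsMittagLeffler.isStableSequence
    (hcomp : ∀ {m n k : ℕ} (h : m ≤ n) (h' : n ≤ k) (x : G k),
      p h (p h' x) = p (h.trans h') x)
    (hML : IsMittagLeffler p) (hmono : HasMonicProjection p) : IsStableSequence G p := by
  choose c hc hlift using hML
  obtain ⟨T, hT⟩ := hmono
  choose c' hc' using hT
  have lift : ∀ {m n : ℕ} (h : m ≤ n), c m ≤ n →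
      ∀ {x : G m}, x ∈ (p (hc m)).range → ∃ g : G n, p h g = x := by
    rintro m n h hn x ⟨g, rfl⟩
    exact hlift m (c m) n (hc m) hn le_rfl g
  refine isStableSequence_of_subsystem hcomp (fun m => (p (hc m)).range) ?_ c hc
    (fun m g => ⟨g, rfl⟩) T ?_ ?_
  · intro m n h x hx
    obtain ⟨g, rfl⟩ := lift (n := max (c m) (c n)) ((hc n).trans (le_max_right _ _))
      (le_max_right _ _) hx
    exact ⟨p (le_max_left _ _) g, by rw [hcomp, hcomp]⟩
  · intro n h x hx hx1
    obtain ⟨g, rfl⟩ := lift (n := max (c n) (c' n h)) ((hc n).trans (le_max_left _ _))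
      (le_max_left _ _) hx
    rw [hcomp] at hx1
    exact hc' n h _ _ (le_max_right _ _) g hx1
  · intro n h y hy
    obtain ⟨g, rfl⟩ := lift (n := max (c T) (c n)) ((hc T).trans (le_max_left _ _))
      (le_max_left _ _) hy
    exact ⟨p ((hc n).trans (le_max_right _ _)) g, ⟨p (le_max_right _ _) g, hcomp _ _ g⟩,
      hcomp _ _ g⟩

theorem isStableSequence_iff
    (hcomp : ∀ {m n k : ℕ} (h : m ≤ n) (h' : n ≤ k) (x : G k),
      p h (p h' x) = p (h.trans h') x) :
    IsStableSequence G p ↔ IsMittagLeffler p ∧ HasMonicProjection p :=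
  ⟨fun h => ⟨h.isMittagLeffler hcomp, h.hasMonicProjection hcomp⟩,
    fun h => h.1.isStableSequence hcomp h.2⟩

end InverseSequence

section Exactness

variable {A B C : ℕ → Type v} [∀ m, Group (A m)] [∀ m, Group (B m)] [∀ m, Group (C m)]

def IsLevelMorphism (pA : ∀ {m n : ℕ}, m ≤ n → (A n →* A m))
    (pB : ∀ {m n : ℕ}, m ≤ n → (B n →* B m)) (f : ∀ m, A m →* B m) : Prop :=
  ∀ (m n : ℕ) (h : m ≤ n) (x : A n), f m (pA h x) = pB h (f n x)

def IsExactAt (f : ∀ m, A m →* B m) (g : ∀ m, B m →* C m) : Prop :=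
  ∀ (m : ℕ) (y : B m), g m y = 1 ↔ ∃ x : A m, f m x = y

variable {f : ∀ m, A m →* B m} {g : ∀ m, B m →* C m}

theorem IsExactAt.apply_apply_eq_one (h : IsExactAt f g) {m : ℕ} (x : A m) : g m (f m x) = 1 :=
  (h m _).2 ⟨x, rfl⟩

theorem IsExactAt.exists_eq_mul_inv (h : IsExactAt f g) {m : ℕ} {y y' : B m}
    (hy : g m y = g m y') : ∃ x : A m, f m x = y * y'⁻¹ :=
  (h m _).1 (by rw [map_mul, map_inv, hy, mul_inv_cancel])

end Exactness

section FiveLemma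

variable {A B C D E : ℕ → Type v}
  [∀ m, Group (A m)] [∀ m, Group (B m)] [∀ m, Group (C m)] [∀ m, Group (D m)] [∀ m, Group (E m)]
  {pA : ∀ {m n : ℕ}, m ≤ n → (A n →* A m)} {pB : ∀ {m n : ℕ}, m ≤ n → (B n →* B m)}
  {pC : ∀ {m n : ℕ}, m ≤ n → (C n →* C m)} {pD : ∀ {m n : ℕ}, m ≤ n → (D n →* D m)}
  {pE : ∀ {m n : ℕ}, m ≤ n → (E n →* E m)}
  {f1 : ∀ m, A m →* B m} {f2 : ∀ m, B m →* C m} {f3 : ∀ m, C m →* D m} {f4 : ∀ m, D m →* E m}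

theorem isMittagLeffler_of_exact
    (hC_comp : ∀ {m n k : ℕ} (h : m ≤ n) (h' : n ≤ k) (x : C k),
      pC h (pC h' x) = pC (h.trans h') x)
    (hD_comp : ∀ {m n k : ℕ} (h : m ≤ n) (h' : n ≤ k) (x : D k),
      pD h (pD h' x) = pD (h.trans h') x)
    (hE_comp : ∀ {m n k : ℕ} (h : m ≤ n) (h' : n ≤ k) (x : E k),
      pE h (pE h' x) = pE (h.trans h') x)
    (hf2 : IsLevelMorphism pB pC f2) (hf3 : IsLevelMorphism pC pD f3)
    (hf4 : IsLevelMorphism pD pE f4) (hexactC : IsExactAt f2 f3) (hexactD : IsExactAt f3 f4)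
    (hB : IsMittagLeffler pB) (hD : IsMittagLeffler pD) (hE : HasMonicProjection pE) :
    IsMittagLeffler pC := by
  obtain ⟨T, hT⟩ := hE
  intro m
  obtain ⟨b, hmb, hBlift⟩ := hB m
  obtain ⟨d, htd, hDlift⟩ := hD (max T b)
  refine ⟨d, by omega, fun k n hmk hkn hdk z => ?_⟩
  obtain ⟨N, hN⟩ := hT n (by omega)
  obtain ⟨w, hw⟩ := hDlift k (max n N) (by omega) (by omega) hdk (f3 k z)
  have hw_ker : pE (show T ≤ max n N by omega) (f4 _ w) = 1 := by
    rw [← hE_comp (show T ≤ max T b by omega) (by omega), ← hf4, hw, ← hf3,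
      hexactD.apply_apply_eq_one, map_one]
  have hζ_ker : f4 n (pD (le_max_left n N) w) = 1 := by
    rw [hf4]
    exact hN _ _ (le_max_right n N) _ hw_ker
  obtain ⟨ζ, hζ⟩ := (hexactD n _).1 hζ_ker
  have heq : f3 _ (pC (show max T b ≤ n by omega) ζ) = f3 _ (pC (by omega) z) := by
    rw [hf3, hζ, hD_comp, hw, hf3]
  obtain ⟨y, hy⟩ := hexactC.exists_eq_mul_inv heq
  obtain ⟨y', hy'⟩ := hBlift _ n (by omega) (by omega) (by omega) y
  refine ⟨(f2 n y')⁻¹ * ζ, ?_⟩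
  rw [map_mul, map_inv, ← hf2, hy', hf2, hy, map_mul, map_inv, hC_comp, hC_comp,
    mul_inv_rev, inv_inv, inv_mul_cancel_right]

theorem hasMonicProjection_of_exact
    (hB_comp : ∀ {m n k : ℕ} (h : m ≤ n) (h' : n ≤ k) (x : B k),
      pB h (pB h' x) = pB (h.trans h') x)
    (hC_comp : ∀ {m n k : ℕ} (h : m ≤ n) (h' : n ≤ k) (x : C k),
      pC h (pC h' x) = pC (h.trans h') x)
    (hf1 : IsLevelMorphism pA pB f1) (hf2 : IsLevelMorphism pB pC f2)
    (hf3 : IsLevelMorphism pC pD f3) (hexactB : IsExactAt f1 f2) (hexactC : IsExactAt f2 f3)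
    (hA : IsMittagLeffler pA) (hB : HasMonicProjection pB) (hD : HasMonicProjection pD) :
    HasMonicProjection pC := by
  obtain ⟨β, hβ⟩ := hB
  obtain ⟨δ, hδ⟩ := hD
  obtain ⟨a, hβa, hAlift⟩ := hA β
  refine ⟨max a δ, fun m hTm => ?_⟩
  obtain ⟨N₀, hN₀⟩ := hβ m (by omega)
  obtain ⟨M₀, hM₀⟩ := hδ (max m N₀) (by omega)
  refine ⟨max (max m N₀) M₀, fun n hmn hcn ξ hξ => ?_⟩
  have hξ_ker : f3 _ (pC (show max m N₀ ≤ n by omega) ξ) = 1 := by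
    rw [hf3]
    refine hM₀ n _ (by omega) _ ?_
    rw [← hf3, ← hC_comp (show δ ≤ max a δ by omega) (by omega), hξ, map_one, map_one]
  obtain ⟨y, hy⟩ := (hexactC _ _).1 hξ_ker
  have hy_ker : f2 _ (pB (show max a δ ≤ max m N₀ by omega) y) = 1 := by
    rw [hf2, hy, hC_comp]
    exact hξ
  obtain ⟨x, hx⟩ := (hexactB _ _).1 hy_ker
  obtain ⟨j, hj⟩ := hAlift _ (max m N₀) (by omega) (by omega) (by omega) x
  have hβ_eq : pB (show β ≤ max m N₀ by omega) y = pB (by omega) (f1 _ j) := by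
    rw [← hB_comp (show β ≤ max a δ by omega) (by omega), ← hx, ← hf1, ← hf1, hj]
  have hm_eq : pB (le_max_left m N₀) y = pB (le_max_left m N₀) (f1 _ j) := by
    have := hN₀ _ (le_max_left m N₀) (le_max_right m N₀) (y * (f1 _ j)⁻¹)
      (by rw [map_mul, map_inv, hβ_eq, mul_inv_cancel])
    rwa [map_mul, map_inv, mul_inv_eq_one] at this
  rw [← hC_comp (le_max_left m N₀) (show max m N₀ ≤ n by omega), ← hy, ← hf2, hm_eq, ← hf1,
    hexactB.apply_apply_eq_one]

end FiveLemma

theorem five_lemma_for_stability_general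
    (A B C D E : ℕ → Type v)
    [∀ m, Group (A m)] [∀ m, Group (B m)] [∀ m, Group (C m)]
    [∀ m, Group (D m)] [∀ m, Group (E m)]
    (pA : ∀ {m n : ℕ}, m ≤ n → (A n →* A m))
    (pB : ∀ {m n : ℕ}, m ≤ n → (B n →* B m))
    (pC : ∀ {m n : ℕ}, m ≤ n → (C n →* C m))
    (pD : ∀ {m n : ℕ}, m ≤ n → (D n →* D m))
    (pE : ∀ {m n : ℕ}, m ≤ n → (E n →* E m))
    (hA_comp : ∀ {m n k : ℕ} (h : m ≤ n) (h' : n ≤ k) (x : A k),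
      pA h (pA h' x) = pA (h.trans h') x)
    (hB_comp : ∀ {m n k : ℕ} (h : m ≤ n) (h' : n ≤ k) (x : B k),
      pB h (pB h' x) = pB (h.trans h') x)
    (hC_comp : ∀ {m n k : ℕ} (h : m ≤ n) (h' : n ≤ k) (x : C k),
      pC h (pC h' x) = pC (h.trans h') x)
    (hD_comp : ∀ {m n k : ℕ} (h : m ≤ n) (h' : n ≤ k) (x : D k),
      pD h (pD h' x) = pD (h.trans h') x)
    (hE_comp : ∀ {m n k : ℕ} (h : m ≤ n) (h' : n ≤ k) (x : E k),
      pE h (pE h' x) = pE (h.trans h') x)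
    -- the level morphisms
    (f1 : ∀ m, A m →* B m) (f2 : ∀ m, B m →* C m)
    (f3 : ∀ m, C m →* D m) (f4 : ∀ m, D m →* E m)
    (hf1 : ∀ (m n : ℕ) (h : m ≤ n) (x : A n), f1 m (pA h x) = pB h (f1 n x))
    (hf2 : ∀ (m n : ℕ) (h : m ≤ n) (x : B n), f2 m (pB h x) = pC h (f2 n x))
    (hf3 : ∀ (m n : ℕ) (h : m ≤ n) (x : C n), f3 m (pC h x) = pD h (f3 n x))
    (hf4 : ∀ (m n : ℕ) (h : m ≤ n) (x : D n), f4 m (pD h x) = pE h (f4 n x))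
    -- exactness at `B`, `C`, and `D` for each fixed index `m`
    (hexactB : ∀ (m : ℕ) (y : B m), f2 m y = 1 ↔ ∃ x : A m, f1 m x = y)
    (hexactC : ∀ (m : ℕ) (y : C m), f3 m y = 1 ↔ ∃ x : B m, f2 m x = y)
    (hexactD : ∀ (m : ℕ) (y : D m), f4 m y = 1 ↔ ∃ x : C m, f3 m x = y)
    -- stability of the four outer sequences
    (hA : IsStableSequence A (fun {m n} h => pA h))
    (hB : IsStableSequence B (fun {m n} h => pB h))
    (hD : IsStableSequence D (fun {m n} h => pD h))
    (hE : IsStableSequence E (fun {m n} h => pE h)) :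
    IsStableSequence C (fun {m n} h => pC h) := by
  obtain ⟨hA_ML, -⟩ := (isStableSequence_iff hA_comp).1 hA
  obtain ⟨hB_ML, hB_mono⟩ := (isStableSequence_iff hB_comp).1 hB
  obtain ⟨hD_ML, hD_mono⟩ := (isStableSequence_iff hD_comp).1 hD
  obtain ⟨-, hE_mono⟩ := (isStableSequence_iff hE_comp).1 hE
  exact (isStableSequence_iff hC_comp).2
    ⟨isMittagLeffler_of_exact hC_comp hD_comp hE_comp hf2 hf3 hf4 hexactC hexactD hB_ML hD_ML
      hE_mono,
    hasMonicProjection_of_exact hB_comp hC_comp hf1 hf2 hf3 hexactB hexactC hA_ML hB_mono hD_mono⟩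

/-- Dydak's five lemma for stability: given an exact sequence of level morphisms of
inverse sequences of groups `(A_m) → (B_m) → (C_m) → (D_m) → (E_m)` in which
`(A_m)`, `(B_m)`, `(D_m)`, and `(E_m)` are stable, the middle sequence `(C_m)` is
stable. -/
theorem five_lemma_for_stability
    (A B C D E : ℕ → Type v)
    [∀ m, Group (A m)] [∀ m, Group (B m)] [∀ m, Group (C m)]
    [∀ m, Group (D m)] [∀ m, Group (E m)]
    (pA : ∀ {m n : ℕ}, m ≤ n → (A n →* A m))
    (pB : ∀ {m n : ℕ}, m ≤ n → (B n →* B m))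
    (pC : ∀ {m n : ℕ}, m ≤ n → (C n →* C m))
    (pD : ∀ {m n : ℕ}, m ≤ n → (D n →* D m))
    (pE : ∀ {m n : ℕ}, m ≤ n → (E n →* E m))
    (hA_id : ∀ (m : ℕ) (x : A m), pA (le_refl m) x = x)
    (hA_comp : ∀ {m n k : ℕ} (h : m ≤ n) (h' : n ≤ k) (x : A k),
      pA h (pA h' x) = pA (h.trans h') x)
    (hB_id : ∀ (m : ℕ) (x : B m), pB (le_refl m) x = x)
    (hB_comp : ∀ {m n k : ℕ} (h : m ≤ n) (h' : n ≤ k) (x : B k),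
      pB h (pB h' x) = pB (h.trans h') x)
    (hC_id : ∀ (m : ℕ) (x : C m), pC (le_refl m) x = x)
    (hC_comp : ∀ {m n k : ℕ} (h : m ≤ n) (h' : n ≤ k) (x : C k),
      pC h (pC h' x) = pC (h.trans h') x)
    (hD_id : ∀ (m : ℕ) (x : D m), pD (le_refl m) x = x)
    (hD_comp : ∀ {m n k : ℕ} (h : m ≤ n) (h' : n ≤ k) (x : D k),
      pD h (pD h' x) = pD (h.trans h') x)
    (hE_id : ∀ (m : ℕ) (x : E m), pE (le_refl m) x = x)
    (hE_comp : ∀ {m n k : ℕ} (h : m ≤ n) (h' : n ≤ k) (x : E k),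
      pE h (pE h' x) = pE (h.trans h') x)
    -- the level morphisms
    (f1 : ∀ m, A m →* B m) (f2 : ∀ m, B m →* C m)
    (f3 : ∀ m, C m →* D m) (f4 : ∀ m, D m →* E m)
    (hf1 : ∀ (m n : ℕ) (h : m ≤ n) (x : A n), f1 m (pA h x) = pB h (f1 n x))
    (hf2 : ∀ (m n : ℕ) (h : m ≤ n) (x : B n), f2 m (pB h x) = pC h (f2 n x))
    (hf3 : ∀ (m n : ℕ) (h : m ≤ n) (x : C n), f3 m (pC h x) = pD h (f3 n x))
    (hf4 : ∀ (m n : ℕ) (h : m ≤ n) (x : D n), f4 m (pD h x) = pE h (f4 n x))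
    -- exactness at `B`, `C`, and `D` for each fixed index `m`
    (hexactB : ∀ (m : ℕ) (y : B m), f2 m y = 1 ↔ ∃ x : A m, f1 m x = y)
    (hexactC : ∀ (m : ℕ) (y : C m), f3 m y = 1 ↔ ∃ x : B m, f2 m x = y)
    (hexactD : ∀ (m : ℕ) (y : D m), f4 m y = 1 ↔ ∃ x : C m, f3 m x = y)
    -- stability of the four outer sequences
    (hA : IsStableSequence A (fun {m n} h => pA h))
    (hB : IsStableSequence B (fun {m n} h => pB h))
    (hD : IsStableSequence D (fun {m n} h => pD h))
    (hE : IsStableSequence E (fun {m n} h => pE h)) :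
    IsStableSequence C (fun {m n} h => pC h) :=
  five_lemma_for_stability_general A B C D E pA pB pC pD pE hA_comp hB_comp hC_comp hD_comp hE_comp
    f1 f2 f3 f4 hf1 hf2 hf3 hf4 hexactB hexactC hexactD hA hB hD hE
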